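/- arXiv:0904.1479 — 2 statements merged into one kernel-verified Lean document; each statement's English description precedes it below -/
import Mathlib

section
/- λ({F_1, F_2}) = 1/3; that is, exc(n, {F_1,F_2})/2^n → 1/3 as n → ∞, where exc(n, {F_1,F_2}) is the maximum size of a subset of V_n that is simultaneously F_1-free and F_2-free. In particular this is strictly smaller than min{λ(F_1), λ(F_2)} = 1/2. -/
open Finset Filter Topology

/-- The weight of a vertex of the hypercube `{0,1}^n`: number of coordinates equal to 1. -/
def cubeWeight {n : ℕ} (x : Fin n → Bool) : ℕ :=
  (Finset.univ.filter fun i => x i = true).card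

/-- The support of a vertex of the hypercube: the set of coordinates equal to 1. -/
def cubeSupp {n : ℕ} (x : Fin n → Bool) : Finset (Fin n) :=
  Finset.univ.filter fun i => x i = true

/-- An embedding of the `d`-dimensional hypercube `Q_d` into `Q_n`: an injective map on
vertices that preserves the edges (pairs at Hamming distance 1). -/
def IsCubeEmbedding {d n : ℕ} (i : (Fin d → Bool) → (Fin n → Bool)) : Prop :=
  Function.Injective i ∧
    ∀ x y : Fin d → Bool, hammingDist x y = 1 → hammingDist (i x) (i y) = 1

/-- `S ⊆ V_n` is `F`-free (for `F ⊆ V_d`) if no embedding `i : Q_d → Q_n` has `i(F) ⊆ S`. -/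
def IsFree {d n : ℕ} (F : Set (Fin d → Bool)) (S : Set (Fin n → Bool)) : Prop :=
  ∀ i : (Fin d → Bool) → (Fin n → Bool), IsCubeEmbedding i → ¬ (i '' F ⊆ S)

/-- `exc n F`: the maximum size of an `F`-free subset of `V_n = {0,1}^n`. -/
noncomputable def exc {d : ℕ} (n : ℕ) (F : Set (Fin d → Bool)) : ℕ :=
  sSup {k : ℕ | ∃ S : Finset (Fin n → Bool), IsFree F (S : Set (Fin n → Bool)) ∧ S.card = k}

/-- F₁ = {(0,0,0),(1,0,0),(0,1,0),(0,0,1)} ⊆ V₃. -/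
def F1 : Set (Fin 3 → Bool) :=
  {![false, false, false], ![true, false, false], ![false, true, false], ![false, false, true]}

/-- F₂ = {(0,0,0),(1,1,0),(1,0,1),(0,1,1)} ⊆ V₃. -/
def F2 : Set (Fin 3 → Bool) :=
  {![false, false, false], ![true, true, false], ![true, false, true], ![false, true, true]}

/-- F₃ = {(0,0,0),(1,1,1)} ⊆ V₃. -/
def F3 : Set (Fin 3 → Bool) :=
  {![false, false, false], ![true, true, true]}

/-- The maximum size of a subset of V_n that is simultaneously F-free and G-free. -/
noncomputable def exc2 {d : ℕ} (n : ℕ) (F G : Set (Fin d → Bool)) : ℕ :=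
  sSup {k : ℕ | ∃ S : Finset (Fin n → Bool),
    IsFree F (S : Set (Fin n → Bool)) ∧ IsFree G (S : Set (Fin n → Bool)) ∧ S.card = k}

/-!
Lower bounds: the vertices of weight `≡ r (mod 3)` form an `{F₁, F₂}`-free set. A copy of `F₁`
contains an edge, whose ends have weights differing by `1`; a copy of `F₂` contains a vertex `a`
and a vertex `a + e_j + e_k` with `a_j = a_k` (two of the three directions agree at `a`), whose
weights differ by `2`. One of the three classes has at least `2ⁿ/3` vertices. In the same way the
classes of `w mod 2`, resp. `⌊w/2⌋ mod 2`, give `λ(F₁), λ(F₂) ≥ 1/2`.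

Upper bound: if `S` is `F₁`-free, every vertex of `S` has at most two neighbours in `S`; if `S` is
`F₂`-free, the link of `a ∈ S` (pairs of directions `j ≠ k` with `a + e_j + e_k ∈ S`) is
triangle-free, so has at most `n²/4` edges by Mantel. Hence the complement of `S` receives at least
`(n - 2)|S|` edges from `S`, while the degrees `d` into `S` satisfy `∑ d² ≤ |S| (n² + 2n) / 2`.
Cauchy–Schwarz over the complement gives `|S| (2(n-2)² + n(n+2)) ≤ 2ⁿ n(n+2)`.
-/

namespace Hypercube

variable {n : ℕ}

def toggle (j : Fin n) (x : Fin n → Bool) : Fin n → Bool := Function.update x j (!x j)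

lemma toggle_apply (j t : Fin n) (x : Fin n → Bool) :
    toggle j x t = if t = j then !x t else x t := by
  unfold toggle; split_ifs with h <;> simp [h]

@[simp] lemma toggle_toggle (j : Fin n) (x : Fin n → Bool) : toggle j (toggle j x) = x := by
  funext t; by_cases h : t = j <;> simp [toggle_apply, h]

lemma toggle_involutive (j : Fin n) : Function.Involutive (toggle j) := toggle_toggle j

lemma toggle_comm (j k : Fin n) (x : Fin n → Bool) :
    toggle j (toggle k x) = toggle k (toggle j x) := by
  funext t; by_cases h1 : t = j <;> by_cases h2 : t = k <;> simp_all [toggle_apply]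

lemma toggle_ne_toggle {j k : Fin n} (hjk : j ≠ k) (x : Fin n → Bool) :
    toggle j x ≠ toggle k x := fun h => by
  simpa [toggle_apply, hjk] using congrFun h j

lemma toggle_toggle_ne_self {j k : Fin n} (hjk : j ≠ k) (x : Fin n → Bool) :
    toggle k (toggle j x) ≠ x := fun h => by
  simpa [toggle_apply, hjk] using congrFun h j

lemma hammingDist_eq_one_iff {x y : Fin n → Bool} : hammingDist x y = 1 ↔ ∃ j, y = toggle j x := by
  constructor
  · intro h
    obtain ⟨j, hj⟩ := card_eq_one.mp h
    refine ⟨j, funext fun t => ?_⟩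
    have ht := Finset.ext_iff.mp hj t
    simp only [mem_filter, mem_univ, true_and, mem_singleton] at ht
    by_cases htj : t = j
    · have := ht.mpr htj
      cases hx : x t <;> simp_all [toggle_apply]
    · simp_all [toggle_apply]
  · rintro ⟨j, rfl⟩
    have : ({t | x t ≠ toggle j x t} : Finset (Fin n)) = {j} := by
      ext t; by_cases h : t = j <;> simp [toggle_apply, h]
    exact (congrArg card this).trans (card_singleton j)

/-- The 4-cycles of the cube are its 2-dimensional faces. -/
lemma eq_of_toggle_toggle_eq {x : Fin n → Bool} {j k p q : Fin n} (hjk : j ≠ k)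
    (h : toggle p (toggle j x) = toggle q (toggle k x)) (hne : toggle q (toggle k x) ≠ x) :
    p = k := by
  have hqk : q ≠ k := by rintro rfl; exact hne (toggle_toggle q x)
  by_contra hpk
  simpa [toggle_apply, hjk.symm, hqk.symm, Ne.symm hpk] using congrFun h k

lemma cubeWeight_toggle_of_eq_false {x : Fin n → Bool} {j : Fin n} (h : x j = false) :
    cubeWeight (toggle j x) = cubeWeight x + 1 := by
  have : univ.filter (fun i => toggle j x i = true)
      = insert j (univ.filter fun i => x i = true) := by
    ext t; by_cases ht : t = j <;> simp [toggle_apply, ht, h]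
  rw [cubeWeight, cubeWeight, this, card_insert_of_notMem (by simp [h])]

lemma cubeWeight_toggle_toggle_of_eq_false {x : Fin n → Bool} {j k : Fin n} (hjk : j ≠ k)
    (hj : x j = false) (hk : x k = false) :
    cubeWeight (toggle k (toggle j x)) = cubeWeight x + 2 := by
  rw [cubeWeight_toggle_of_eq_false (by simpa [toggle_apply, hjk.symm] using hk),
    cubeWeight_toggle_of_eq_false hj]

lemma cubeWeight_toggle (x : Fin n → Bool) (j : Fin n) :
    cubeWeight (toggle j x) = cubeWeight x + 1 ∨ cubeWeight x = cubeWeight (toggle j x) + 1 := by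
  cases h : x j
  · exact .inl (cubeWeight_toggle_of_eq_false h)
  · have key := cubeWeight_toggle_of_eq_false (x := toggle j x) (j := j) (by simp [toggle_apply, h])
    exact .inr (by rwa [toggle_toggle] at key)

lemma cubeWeight_toggle_toggle_of_eq {x : Fin n → Bool} {j k : Fin n} (hjk : j ≠ k)
    (h : x j = x k) :
    cubeWeight (toggle k (toggle j x)) = cubeWeight x + 2 ∨
      cubeWeight x = cubeWeight (toggle k (toggle j x)) + 2 := by
  cases hj : x j
  · exact .inl (cubeWeight_toggle_toggle_of_eq_false hjk hj (h ▸ hj))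
  · refine .inr ?_
    have key := cubeWeight_toggle_toggle_of_eq_false (x := toggle k (toggle j x)) hjk
      (by simp [toggle_apply, hj, hjk]) (by simp [toggle_apply, ← h, hj, hjk.symm])
    have hback : toggle k (toggle j (toggle k (toggle j x))) = x := by
      rw [toggle_comm j k (toggle j x)]; simp
    rwa [hback] at key

end Hypercube

namespace IsCubeEmbedding

open Hypercube

variable {n d : ℕ} {i : (Fin d → Bool) → (Fin n → Bool)}

lemma exists_map_toggle (hi : IsCubeEmbedding i) (x : Fin d → Bool) (s : Fin d) :
    ∃ j, i (toggle s x) = toggle j (i x) :=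
  hammingDist_eq_one_iff.mp (hi.2 _ _ (hammingDist_eq_one_iff.mpr ⟨s, rfl⟩))

lemma map_toggle_toggle (hi : IsCubeEmbedding i) {x : Fin d → Bool} {s t : Fin d} {j k : Fin n}
    (hst : s ≠ t) (hj : i (toggle s x) = toggle j (i x)) (hk : i (toggle t x) = toggle k (i x)) :
    i (toggle t (toggle s x)) = toggle k (toggle j (i x)) := by
  have hjk : j ≠ k := by
    rintro rfl
    exact toggle_ne_toggle hst x (hi.1 (hj.trans hk.symm))
  obtain ⟨p, hp⟩ := hi.exists_map_toggle (toggle s x) t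
  obtain ⟨q, hq⟩ := hi.exists_map_toggle (toggle t x) s
  rw [hj] at hp
  rw [hk, toggle_comm] at hq
  have hne : toggle q (toggle k (i x)) ≠ i x := fun h =>
    toggle_toggle_ne_self hst.symm x (hi.1 (by rw [toggle_comm, hq, h]))
  rw [hp, eq_of_toggle_toggle_eq hjk (hp.symm.trans hq) hne]

end IsCubeEmbedding

namespace Hypercube

variable {n d : ℕ}

/-- The subcube through `a` in the directions `e`: the vertex `x` of `Q_d` goes to `a` with the
coordinates `e s` toggled for which `x s = true`. -/
noncomputable def cubeEmbed (a : Fin n → Bool) (e : Fin d ↪ Fin n) (x : Fin d → Bool) :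
    Fin n → Bool :=
  fun t => xor (a t) (Function.extend e x (fun _ => false) t)

lemma cubeEmbed_false (a : Fin n → Bool) (e : Fin d ↪ Fin n) :
    cubeEmbed a e (fun _ => false) = a := by
  funext t
  by_cases ht : ∃ s, e s = t
  · obtain ⟨s, rfl⟩ := ht
    simp [cubeEmbed, e.injective.extend_apply]
  · simp [cubeEmbed, Function.extend_apply' _ _ _ ht]

lemma cubeEmbed_toggle (a : Fin n → Bool) (e : Fin d ↪ Fin n) (x : Fin d → Bool) (s : Fin d) :
    cubeEmbed a e (toggle s x) = toggle (e s) (cubeEmbed a e x) := by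
  funext t
  by_cases ht : ∃ u, e u = t
  · obtain ⟨u, rfl⟩ := ht
    by_cases hu : u = s
    · subst hu; simp [cubeEmbed, e.injective.extend_apply, toggle_apply]
    · simp [cubeEmbed, e.injective.extend_apply, toggle_apply, hu]
  · have hs : t ≠ e s := fun h => ht ⟨s, h.symm⟩
    simp [cubeEmbed, Function.extend_apply' _ _ _ ht, toggle_apply, hs]

lemma isCubeEmbedding_cubeEmbed (a : Fin n → Bool) (e : Fin d ↪ Fin n) :
    IsCubeEmbedding (cubeEmbed a e) := by
  refine ⟨fun x y hxy => funext fun s => ?_, fun x y hxy => ?_⟩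
  · simpa [cubeEmbed, e.injective.extend_apply] using congrFun hxy (e s)
  · obtain ⟨s, rfl⟩ := hammingDist_eq_one_iff.mp hxy
    exact hammingDist_eq_one_iff.mpr ⟨e s, cubeEmbed_toggle a e x s⟩

lemma F1_eq : F1 = insert (fun _ => false) (Set.range fun s => toggle s fun _ => false) := by
  ext x
  simp only [F1, Set.mem_insert_iff, Set.mem_singleton_iff, Set.mem_range]
  revert x
  decide

lemma F2_eq : F2 = insert (fun _ => false)
    {x | ∃ s u, s ≠ u ∧ x = toggle u (toggle s fun _ => false)} := by
  ext x
  simp only [F2, Set.mem_insert_iff, Set.mem_singleton_iff, Set.mem_ofPred_eq]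
  revert x
  decide

lemma isFree_F1_of_cubeWeight (P : ℕ → Prop) (hP : ∀ w, P w → ¬P (w + 1)) :
    IsFree F1 {x : Fin n → Bool | P (cubeWeight x)} := by
  intro i hi hsub
  obtain ⟨j, hj⟩ := hi.exists_map_toggle (fun _ => false) 0
  have h0 : P (cubeWeight (i fun _ => false)) := hsub ⟨_, by rw [F1_eq]; exact .inl rfl, rfl⟩
  have h1 : P (cubeWeight (toggle j (i fun _ => false))) :=
    hj ▸ hsub ⟨_, by rw [F1_eq]; exact .inr ⟨0, rfl⟩, rfl⟩
  rcases cubeWeight_toggle (i fun _ => false) j with h | h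
  · exact hP _ h0 (h ▸ h1)
  · exact hP _ h1 (h ▸ h0)

lemma isFree_F2_of_cubeWeight (P : ℕ → Prop) (hP : ∀ w, P w → ¬P (w + 2)) :
    IsFree F2 {x : Fin n → Bool | P (cubeWeight x)} := by
  intro i hi hsub
  choose dir hdir using hi.exists_map_toggle (fun _ => false)
  set A := i fun _ => false
  -- two of the three directions `dir s` point the same way (up or down) at `A`
  obtain ⟨s, u, hsu, hA⟩ := Fintype.exists_ne_map_eq_of_card_lt (fun s => A (dir s)) (by simp)
  have hdir_ne : dir s ≠ dir u := fun h =>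
    toggle_ne_toggle hsu _ (hi.1 ((hdir s).trans (h ▸ (hdir u).symm)))
  have h0 : P (cubeWeight A) := hsub ⟨_, by rw [F2_eq]; exact .inl rfl, rfl⟩
  have h1 : P (cubeWeight (toggle (dir u) (toggle (dir s) A))) :=
    hi.map_toggle_toggle hsu (hdir s) (hdir u) ▸
      hsub ⟨_, by rw [F2_eq]; exact .inr ⟨s, u, hsu, rfl⟩, rfl⟩
  rcases cubeWeight_toggle_toggle_of_eq hdir_ne hA with h | h
  · exact hP _ h0 (h ▸ h1)
  · exact hP _ h1 (h ▸ h0)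

end Hypercube

namespace SimpleGraph

variable {V : Type*} [Fintype V] {G : SimpleGraph V} [DecidableRel G.Adj]

/-- Mantel's theorem. -/
lemma CliqueFree.four_mul_card_edgeFinset_le (h : G.CliqueFree 3) :
    4 * #G.edgeFinset ≤ Fintype.card V ^ 2 := by
  have key := CliqueFree.card_edgeFinset_le (r := 2) h
  dsimp only at key
  have hchoose : (Fintype.card V % 2).choose 2 = 0 :=
    Nat.choose_eq_zero_of_lt (Nat.mod_lt _ two_pos)
  rw [hchoose, add_zero, Nat.add_one_sub_one, mul_one] at key
  have := Nat.div_mul_le_self (Fintype.card V ^ 2 - (Fintype.card V % 2) ^ 2) (2 * 2)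
  omega

end SimpleGraph

namespace Hypercube

variable {n : ℕ}

def cubeDegree (S : Finset (Fin n → Bool)) (x : Fin n → Bool) : ℕ :=
  #{j | toggle j x ∈ S}

def linkGraph (S : Finset (Fin n → Bool)) (a : Fin n → Bool) : SimpleGraph (Fin n) where
  Adj j k := j ≠ k ∧ toggle k (toggle j a) ∈ S
  symm := ⟨fun j k h => ⟨h.1.symm, toggle_comm j k a ▸ h.2⟩⟩
  loopless := ⟨fun _ h => h.1 rfl⟩

@[simp] lemma linkGraph_adj {S : Finset (Fin n → Bool)} {a : Fin n → Bool} {j k : Fin n} :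
    (linkGraph S a).Adj j k ↔ j ≠ k ∧ toggle k (toggle j a) ∈ S := Iff.rfl

instance (S : Finset (Fin n → Bool)) (a : Fin n → Bool) : DecidableRel (linkGraph S a).Adj :=
  fun j k => inferInstanceAs (Decidable (j ≠ k ∧ toggle k (toggle j a) ∈ S))

variable (S : Finset (Fin n → Bool))

lemma sum_cubeDegree_mul (f : (Fin n → Bool) → ℕ) :
    ∑ x, cubeDegree S x * f x = ∑ a ∈ S, ∑ j, f (toggle j a) := by
  calc ∑ x, cubeDegree S x * f x
      = ∑ j, ∑ x, if toggle j x ∈ S then f x else 0 := by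
        rw [sum_comm]
        simp only [cubeDegree, card_filter, sum_mul, ite_mul, one_mul, zero_mul]
    _ = ∑ j, ∑ a, if a ∈ S then f (toggle j a) else 0 := by
        refine sum_congr rfl fun j _ => ?_
        rw [← Equiv.sum_comp (toggle_involutive j).toPerm]
        simp
    _ = ∑ a ∈ S, ∑ j, f (toggle j a) := by
        rw [sum_comm]
        simp [sum_ite_mem]

lemma sum_cubeDegree : ∑ x, cubeDegree S x = n * #S := by
  simpa [mul_comm] using sum_cubeDegree_mul S 1

lemma sum_cubeDegree_sq : ∑ x, cubeDegree S x ^ 2 = ∑ a ∈ S, ∑ j, cubeDegree S (toggle j a) := by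
  simpa [sq] using sum_cubeDegree_mul S (cubeDegree S)

variable {S}

lemma cubeDegree_toggle_of_mem {a : Fin n → Bool} (ha : a ∈ S) (j : Fin n) :
    cubeDegree S (toggle j a) = (linkGraph S a).degree j + 1 := by
  have : ({k | toggle k (toggle j a) ∈ S} : Finset (Fin n))
      = insert j ((linkGraph S a).neighborFinset j) := by
    ext k
    by_cases hk : k = j
    · simp [hk, ha]
    · simp [hk, Ne.symm hk]
  rw [cubeDegree, this, card_insert_of_notMem (by simp), SimpleGraph.card_neighborFinset_eq_degree]

lemma cubeDegree_le_two (hS : IsFree F1 (S : Set (Fin n → Bool))) {a : Fin n → Bool} (ha : a ∈ S) :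
    cubeDegree S a ≤ 2 := by
  by_contra! h
  obtain ⟨t, hts, htc⟩ := exists_subset_card_eq (show 3 ≤ cubeDegree S a from h)
  refine hS (cubeEmbed a (t.orderEmbOfFin htc).toEmbedding) (isCubeEmbedding_cubeEmbed _ _) ?_
  rw [F1_eq, Set.image_insert_eq, cubeEmbed_false, Set.insert_subset_iff]
  refine ⟨ha, ?_⟩
  rintro _ ⟨_, ⟨s, rfl⟩, rfl⟩
  rw [cubeEmbed_toggle, cubeEmbed_false]
  exact (mem_filter.mp (hts (t.orderEmbOfFin_mem htc s))).2

lemma cliqueFree_linkGraph (hS : IsFree F2 (S : Set (Fin n → Bool))) {a : Fin n → Bool}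
    (ha : a ∈ S) : (linkGraph S a).CliqueFree 3 := by
  intro t ht
  refine hS (cubeEmbed a (t.orderEmbOfFin ht.card_eq).toEmbedding)
    (isCubeEmbedding_cubeEmbed _ _) ?_
  rw [F2_eq, Set.image_insert_eq, cubeEmbed_false, Set.insert_subset_iff]
  refine ⟨ha, ?_⟩
  rintro _ ⟨_, ⟨s, u, hsu, rfl⟩, rfl⟩
  rw [cubeEmbed_toggle, cubeEmbed_toggle, cubeEmbed_false]
  exact (linkGraph_adj.mp (ht.isClique (t.orderEmbOfFin_mem _ s) (t.orderEmbOfFin_mem _ u)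
    ((t.orderEmbOfFin ht.card_eq).injective.ne hsu))).2

lemma two_mul_sum_cubeDegree_toggle_le (hS : IsFree F2 (S : Set (Fin n → Bool)))
    {a : Fin n → Bool} (ha : a ∈ S) :
    2 * ∑ j, cubeDegree S (toggle j a) ≤ n ^ 2 + 2 * n := by
  have hmantel := (cliqueFree_linkGraph hS ha).four_mul_card_edgeFinset_le
  simp only [cubeDegree_toggle_of_mem ha, sum_add_distrib,
    SimpleGraph.sum_degrees_eq_twice_card_edges, Fintype.card_fin] at hmantel ⊢
  simp
  omega

theorem card_mul_le_of_isFree {S : Finset (Fin n → Bool)}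
    (hS₁ : IsFree F1 (S : Set (Fin n → Bool))) (hS₂ : IsFree F2 (S : Set (Fin n → Bool))) :
    #S * (2 * (n - 2) ^ 2 + n * (n + 2)) ≤ 2 ^ n * (n * (n + 2)) := by
  set d := cubeDegree S
  have hin : ∑ x ∈ S, d x ≤ 2 * #S := by
    simpa [mul_comm] using sum_le_sum fun x hx => cubeDegree_le_two hS₁ hx
  have hout : (n - 2) * #S ≤ ∑ x ∈ Sᶜ, d x := by
    have := sum_add_sum_compl S d
    rw [sum_cubeDegree] at this
    rw [Nat.sub_mul]
    omega
  have hsq : 2 * ∑ x ∈ Sᶜ, d x ^ 2 ≤ #S * (n * (n + 2)) := calc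
    2 * ∑ x ∈ Sᶜ, d x ^ 2 ≤ 2 * ∑ x, d x ^ 2 :=
      Nat.mul_le_mul_left 2 (sum_le_sum_of_subset (subset_univ _))
    _ = ∑ a ∈ S, 2 * ∑ j, d (toggle j a) := by rw [sum_cubeDegree_sq, mul_sum]
    _ ≤ ∑ _a ∈ S, (n ^ 2 + 2 * n) :=
      sum_le_sum fun a ha => two_mul_sum_cubeDegree_toggle_le hS₂ ha
    _ = #S * (n * (n + 2)) := by rw [sum_const, smul_eq_mul]; ring
  have hcompl : #Sᶜ + #S = 2 ^ n := by simp [card_compl_add_card]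
  have hCS := sq_sum_le_card_mul_sum_sq (s := Sᶜ) (f := d)
  have key : #S * (2 * (n - 2) ^ 2 * #S) ≤ #S * (#Sᶜ * (n * (n + 2))) := calc
    #S * (2 * (n - 2) ^ 2 * #S) = 2 * ((n - 2) * #S) ^ 2 := by ring
    _ ≤ 2 * (∑ x ∈ Sᶜ, d x) ^ 2 := by gcongr
    _ ≤ #Sᶜ * (2 * ∑ x ∈ Sᶜ, d x ^ 2) := by linarith
    _ ≤ #Sᶜ * (#S * (n * (n + 2))) := by gcongr
    _ = #S * (#Sᶜ * (n * (n + 2))) := by ring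
  rcases Nat.eq_zero_or_pos #S with h0 | hpos
  · simp [h0]
  · have := Nat.le_of_mul_le_mul_left key hpos
    rw [← hcompl]
    nlinarith

end Hypercube

section Extremal

open Hypercube

variable {n d : ℕ} {F G : Set (Fin d → Bool)}

lemma card_le_exc {S : Finset (Fin n → Bool)} (hS : IsFree F (S : Set (Fin n → Bool))) :
    #S ≤ exc n F :=
  le_csSup ⟨2 ^ n, by rintro _ ⟨T, -, rfl⟩; simpa using T.card_le_univ⟩ ⟨S, hS, rfl⟩

lemma card_le_exc2 {S : Finset (Fin n → Bool)} (hF : IsFree F (S : Set (Fin n → Bool)))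
    (hG : IsFree G (S : Set (Fin n → Bool))) : #S ≤ exc2 n F G :=
  le_csSup ⟨2 ^ n, by rintro _ ⟨T, -, -, rfl⟩; simpa using T.card_le_univ⟩ ⟨S, hF, hG, rfl⟩

lemma isFree_empty (hF : F.Nonempty) :
    IsFree F ((∅ : Finset (Fin n → Bool)) : Set (Fin n → Bool)) :=
  fun i _ hsub => by
    obtain ⟨x, hx⟩ := hF
    simpa using hsub (Set.mem_image_of_mem i hx)

lemma exists_card_eq_exc2 (hF : F.Nonempty) (hG : G.Nonempty) : ∃ S : Finset (Fin n → Bool),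
    IsFree F (S : Set (Fin n → Bool)) ∧ IsFree G (S : Set (Fin n → Bool)) ∧ #S = exc2 n F G :=
  Nat.sSup_mem (s := {k | ∃ S : Finset (Fin n → Bool), IsFree F (S : Set (Fin n → Bool)) ∧
      IsFree G (S : Set (Fin n → Bool)) ∧ #S = k})
    ⟨0, ∅, isFree_empty hF, isFree_empty hG, rfl⟩
    ⟨2 ^ n, by rintro _ ⟨T, -, -, rfl⟩; simpa using T.card_le_univ⟩

lemma two_pow_le_mul_of_fibers {q M : ℕ} (c : (Fin n → Bool) → ℕ) (hc : ∀ x, c x < q)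
    (hM : ∀ r < q, #{x | c x = r} ≤ M) : 2 ^ n ≤ q * M := by
  have := card_le_mul_card_image_of_maps_to (s := univ) (t := range q)
    (fun x _ => mem_range.mpr (hc x)) M fun r hr => hM r (mem_range.mp hr)
  simpa [mul_comm] using this

lemma two_pow_le_three_mul_exc2 : 2 ^ n ≤ 3 * exc2 n F1 F2 :=
  two_pow_le_mul_of_fibers (fun x => cubeWeight x % 3) (fun _ => Nat.mod_lt _ three_pos)
    fun r _ => card_le_exc2
      (by simpa using isFree_F1_of_cubeWeight (n := n) (fun w => w % 3 = r) (by omega))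
      (by simpa using isFree_F2_of_cubeWeight (n := n) (fun w => w % 3 = r) (by omega))

lemma two_pow_le_two_mul_exc_F1 : 2 ^ n ≤ 2 * exc n F1 :=
  two_pow_le_mul_of_fibers (fun x => cubeWeight x % 2) (fun _ => Nat.mod_lt _ two_pos)
    fun r _ => card_le_exc
      (by simpa using isFree_F1_of_cubeWeight (n := n) (fun w => w % 2 = r) (by omega))

lemma two_pow_le_two_mul_exc_F2 : 2 ^ n ≤ 2 * exc n F2 :=
  two_pow_le_mul_of_fibers (fun x => cubeWeight x / 2 % 2) (fun _ => Nat.mod_lt _ two_pos)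
    fun r _ => card_le_exc
      (by simpa using isFree_F2_of_cubeWeight (n := n) (fun w => w / 2 % 2 = r) (by omega))

lemma exc2_mul_le : exc2 n F1 F2 * (2 * (n - 2) ^ 2 + n * (n + 2)) ≤ 2 ^ n * (n * (n + 2)) := by
  obtain ⟨S, hS₁, hS₂, hS⟩ :=
    exists_card_eq_exc2 (n := n) ⟨_, Set.mem_insert _ _⟩ ⟨_, Set.mem_insert _ _⟩
  exact hS ▸ card_mul_le_of_isFree hS₁ hS₂

end Extremal

lemma one_div_le_div_two_pow {q a n : ℕ} (hq : 0 < q) (h : 2 ^ n ≤ q * a) :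
    (1 : ℝ) / q ≤ a / 2 ^ n := by
  rw [div_le_div_iff₀ (by positivity) (by positivity), one_mul, mul_comm]
  exact_mod_cast h

lemma tendsto_rational_one_third :
    Tendsto (fun n : ℕ => (n : ℝ) * (n + 2) / (2 * ((n : ℝ) - 2) ^ 2 + n * (n + 2))) atTop
      (𝓝 (1 / 3)) := by
  have hg : Tendsto (fun x : ℝ => (1 + 2 * x) / (2 * (1 - 2 * x) ^ 2 + (1 + 2 * x))) (𝓝 0)
      (𝓝 (1 / 3)) := by
    have : ContinuousAt (fun x : ℝ => (1 + 2 * x) / (2 * (1 - 2 * x) ^ 2 + (1 + 2 * x))) 0 :=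
      by fun_prop (disch := norm_num)
    convert this.tendsto using 2
    norm_num
  refine (hg.comp tendsto_one_div_atTop_nhds_zero_nat).congr' ?_
  filter_upwards [eventually_ge_atTop 1] with n hn
  have : (n : ℝ) ≠ 0 := by positivity
  simp only [Function.comp_apply]
  field_simp

lemma exc2_div_two_pow_le {n : ℕ} (hn : 2 ≤ n) :
    (exc2 n F1 F2 : ℝ) / 2 ^ n ≤ (n : ℝ) * (n + 2) / (2 * ((n : ℝ) - 2) ^ 2 + n * (n + 2)) := by
  have h := exc2_mul_le (n := n)
  have hcast : ((n - 2 : ℕ) : ℝ) = n - 2 := by push_cast [hn]; ring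
  rw [div_le_div_iff₀ (by positivity) (by positivity)]
  have := (Nat.cast_le (α := ℝ)).mpr h
  push_cast [hcast] at this
  linarith

/-- λ({F₁, F₂}) = 1/3; in particular it is strictly smaller than
min{λ(F₁), λ(F₂)} = 1/2. -/
theorem lambda_F1F2 :
    Filter.Tendsto (fun n : ℕ => (exc2 n F1 F2 : ℝ) / 2 ^ n) Filter.atTop (𝓝 (1 / 3)) ∧
    (∀ L₁ L₂ : ℝ,
      Filter.Tendsto (fun n : ℕ => (exc n F1 : ℝ) / 2 ^ n) Filter.atTop (𝓝 L₁) →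
      Filter.Tendsto (fun n : ℕ => (exc n F2 : ℝ) / 2 ^ n) Filter.atTop (𝓝 L₂) →
      (1 : ℝ) / 3 < min L₁ L₂) := by
  refine ⟨tendsto_of_tendsto_of_tendsto_of_le_of_le' tendsto_const_nhds tendsto_rational_one_third
    (Eventually.of_forall fun n => ?_) ((eventually_ge_atTop 2).mono fun n => exc2_div_two_pow_le),
    fun L₁ L₂ h₁ h₂ => ?_⟩
  · simpa using one_div_le_div_two_pow three_pos two_pow_le_three_mul_exc2
  · have hL₁ : (1 : ℝ) / 2 ≤ L₁ := by
      simpa using ge_of_tendsto' h₁ fun _ =>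
        one_div_le_div_two_pow two_pos two_pow_le_two_mul_exc_F1
    have hL₂ : (1 : ℝ) / 2 ≤ L₂ := by
      simpa using ge_of_tendsto' h₂ fun _ =>
        one_div_le_div_two_pow two_pos two_pow_le_two_mul_exc_F2
    exact lt_min (by linarith) (by linarith)
end

section
/- For every odd integer d ≥ 3, λ(F_d^d) = 1/2, where F_d^d = {x ∈ V_d : |x| = 0 or |x| = d} consists of a pair of antipodal vertices of the d-cube. -/
open Finset Filter Topology

/-- F₁^d = {x ∈ V_d : |x| = 0 or |x| = 1}. -/
def F1d (d : ℕ) : Set (Fin d → Bool) :=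
  {x | cubeWeight x = 0 ∨ cubeWeight x = 1}

/-- F₂^d = {x ∈ V_d : |x| = 0, or |x| = 2 with supp(x) = {i,j} and i ≢ j (mod 2)}. -/
def F2d (d : ℕ) : Set (Fin d → Bool) :=
  {x | cubeWeight x = 0 ∨
    (cubeWeight x = 2 ∧ ∃ i j : Fin d, (i : ℕ) % 2 ≠ (j : ℕ) % 2 ∧ cubeSupp x = {i, j})}

/-- F_d^d = {x ∈ V_d : |x| = 0 or |x| = d}, a pair of antipodal vertices. -/
def Fdd (d : ℕ) : Set (Fin d → Bool) :=
  {x | cubeWeight x = 0 ∨ cubeWeight x = d}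

/-! An edge-preserving map `i : Q_d → Q_n` sends the path `0 = p_0, p_1, …, p_d = 1` through the
vertices `p_k = 1^k 0^(d-k)` to a walk of length `d`, and each step of a walk changes the parity
of the weight; so `|i 0| + |i 1| ≡ d (mod 2)`. For odd `d` the even-weight vertices, half of
`V_n`, therefore form an `F_d^d`-free set. Conversely, for `n ≥ d`, `x` and the vertex obtained by
flipping its first `d` coordinates are the images of `0` and `1` under the embedding
`y ↦ x + (y, 0)`, so an `F_d^d`-free set meets each of the `2^(n-1)` pairs `{x, flipPrefix d x}`
at most once. Hence `exc n (Fdd d) = 2^(n-1)` for all `n ≥ d`. -/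

section Involution

variable {α : Type*} [Fintype α] [DecidableEq α] {f : α → α} {S : Finset α}

lemma two_mul_card_le_of_involutive (hf : Function.Involutive f) (h : ∀ x ∈ S, f x ∉ S) :
    2 * #S ≤ Fintype.card α := by
  have hdisj : Disjoint S (S.image f) := by
    simp only [disjoint_left, mem_image, not_exists, not_and]
    rintro _ hx y hy rfl
    exact h y hy hx
  have := card_le_univ (S ∪ S.image f)
  rw [card_union_of_disjoint hdisj, card_image_of_injective _ hf.injective] at this
  omega

lemma two_mul_card_eq_of_involutive (hf : Function.Involutive f) (h : ∀ x, x ∈ S ↔ f x ∉ S) :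
    2 * #S = Fintype.card α := by
  have himage : S.image f = Sᶜ := by
    ext x
    refine ⟨fun hx => ?_, fun hx => mem_image.mpr ⟨f x, ?_, hf x⟩⟩
    · obtain ⟨y, hy, rfl⟩ := mem_image.mp hx
      exact mem_compl.mpr ((h y).mp hy)
    · rw [h, hf]
      exact mem_compl.mp hx
  have := card_compl S
  rw [← himage, card_image_of_injective _ hf.injective] at this
  have := card_le_univ S
  omega

end Involution

lemma cubeWeight_add_cubeWeight {n : ℕ} (a b : Fin n → Bool) :
    cubeWeight a + cubeWeight b = hammingDist a b + 2 * #(cubeSupp a ∩ cubeSupp b) := by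
  simp only [cubeWeight, cubeSupp, hammingDist, ← filter_and, card_filter, ← sum_add_distrib,
    mul_sum]
  refine sum_congr rfl fun j _ => ?_
  cases a j <;> cases b j <;> rfl

def prefixVertex (d k : ℕ) : Fin d → Bool := fun j => decide ((j : ℕ) < k)

lemma hammingDist_prefixVertex_succ {d k : ℕ} (hk : k < d) :
    hammingDist (prefixVertex d k) (prefixVertex d (k + 1)) = 1 := by
  rw [hammingDist, card_eq_one]
  refine ⟨⟨k, hk⟩, ?_⟩
  ext j
  simp only [prefixVertex, mem_filter, mem_univ, true_and, mem_singleton, Fin.ext_iff, ne_eq,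
    decide_eq_decide]
  omega

lemma prefixVertex_zero (d : ℕ) : prefixVertex d 0 = fun _ => false := by
  funext j; simp [prefixVertex]

lemma prefixVertex_self (d : ℕ) : prefixVertex d d = fun _ => true := by
  funext j; simp [prefixVertex]

lemma cubeWeight_image_prefixVertex_mod_two {d n k : ℕ} {i : (Fin d → Bool) → (Fin n → Bool)}
    (hi : ∀ x y, hammingDist x y = 1 → hammingDist (i x) (i y) = 1) (hk : k ≤ d) :
    (cubeWeight (i (prefixVertex d 0)) + cubeWeight (i (prefixVertex d k))) % 2 = k % 2 := by
  induction k with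
  | zero => omega
  | succ k ih =>
    have hstep := cubeWeight_add_cubeWeight (i (prefixVertex d k)) (i (prefixVertex d (k + 1)))
    rw [hi _ _ (hammingDist_prefixVertex_succ hk)] at hstep
    have := ih (by omega)
    omega

lemma cubeWeight_image_antipodal_mod_two {d n : ℕ} {i : (Fin d → Bool) → (Fin n → Bool)}
    (hi : ∀ x y, hammingDist x y = 1 → hammingDist (i x) (i y) = 1) :
    (cubeWeight (i fun _ => false) + cubeWeight (i fun _ => true)) % 2 = d % 2 := by
  simpa only [prefixVertex_zero, prefixVertex_self] using
    cubeWeight_image_prefixVertex_mod_two hi le_rfl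

lemma Fdd_eq (d : ℕ) : Fdd d = {fun _ => false, fun _ => true} := by
  ext x
  have hfull : cubeWeight x = d ↔ ∀ j, x j = true := by
    simpa [cubeWeight] using card_filter_eq_iff (s := univ) (p := fun j => x j = true)
  have hempty : cubeWeight x = 0 ↔ ∀ j, x j = false := by
    simp [cubeWeight]
  simp only [Fdd, Set.mem_insert_iff, Set.mem_singleton_iff, funext_iff, ← hfull, ← hempty]
  rfl

lemma isFree_Fdd_iff {d n : ℕ} {S : Set (Fin n → Bool)} :
    IsFree (Fdd d) S ↔ ∀ i : (Fin d → Bool) → (Fin n → Bool), IsCubeEmbedding i →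
      ¬ (i (fun _ => false) ∈ S ∧ i (fun _ => true) ∈ S) := by
  simp only [IsFree, Fdd_eq, Set.image_pair, Set.pair_subset_iff]

def flipPrefix (d : ℕ) {n : ℕ} (x : Fin n → Bool) : Fin n → Bool :=
  fun j => xor (x j) (decide ((j : ℕ) < d))

lemma flipPrefix_involutive (d n : ℕ) : Function.Involutive (flipPrefix d (n := n)) := by
  intro x; funext j; simp [flipPrefix]

def subcubeEmb {d n : ℕ} (x : Fin n → Bool) (y : Fin d → Bool) : Fin n → Bool :=
  fun j => xor (x j) (if h : (j : ℕ) < d then y ⟨j, h⟩ else false)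

lemma subcubeEmb_false {d n : ℕ} (x : Fin n → Bool) :
    subcubeEmb x (fun _ : Fin d => false) = x := by
  funext j; simp [subcubeEmb]

lemma subcubeEmb_true {d n : ℕ} (x : Fin n → Bool) :
    subcubeEmb x (fun _ : Fin d => true) = flipPrefix d x := by
  funext j; by_cases h : (j : ℕ) < d <;> simp [subcubeEmb, flipPrefix, h]

lemma hammingDist_subcubeEmb {d n : ℕ} (hdn : d ≤ n) (x : Fin n → Bool)
    (y y' : Fin d → Bool) :
    hammingDist (subcubeEmb x y) (subcubeEmb x y') = hammingDist y y' := by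
  rw [hammingDist, hammingDist, ← card_map (Fin.castLEEmb hdn)]
  congr 1
  ext j
  simp only [subcubeEmb, mem_filter, mem_univ, true_and, Finset.mem_map, ne_eq, Bool.xor_right_inj]
  constructor
  · intro hne
    by_cases h : (j : ℕ) < d
    · exact ⟨⟨j, h⟩, by simpa [h] using hne, rfl⟩
    · simp [h] at hne
  · rintro ⟨k, hk, rfl⟩
    simpa using hk

lemma isCubeEmbedding_subcubeEmb {d n : ℕ} (hdn : d ≤ n) (x : Fin n → Bool) :
    IsCubeEmbedding (subcubeEmb (d := d) x) := by
  refine ⟨fun y y' h => ?_, fun y y' h => by rwa [hammingDist_subcubeEmb hdn]⟩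
  rw [← hammingDist_eq_zero, ← hammingDist_subcubeEmb hdn x, h, hammingDist_self]

lemma hammingDist_flipPrefix {d n : ℕ} (hdn : d ≤ n) (x : Fin n → Bool) :
    hammingDist x (flipPrefix d x) = d := by
  have h := hammingDist_subcubeEmb hdn x (fun _ => false) fun _ => true
  rw [subcubeEmb_false, subcubeEmb_true] at h
  simpa [hammingDist] using h

lemma flipPrefix_notMem_of_isFree {d n : ℕ} (hdn : d ≤ n) {S : Set (Fin n → Bool)}
    (hS : IsFree (Fdd d) S) {x : Fin n → Bool} (hx : x ∈ S) : flipPrefix d x ∉ S := fun hfx =>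
  isFree_Fdd_iff.mp hS _ (isCubeEmbedding_subcubeEmb hdn x)
    ⟨by rwa [subcubeEmb_false], by rwa [subcubeEmb_true]⟩

def evenWeight (n : ℕ) : Finset (Fin n → Bool) := univ.filter fun x => cubeWeight x % 2 = 0

lemma two_mul_card_evenWeight {n : ℕ} (hn : 1 ≤ n) : 2 * #(evenWeight n) = 2 ^ n := by
  rw [two_mul_card_eq_of_involutive (flipPrefix_involutive 1 n) fun x => ?_]
  · simp
  have hpar := cubeWeight_add_cubeWeight x (flipPrefix 1 x)
  rw [hammingDist_flipPrefix hn] at hpar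
  simp only [evenWeight, mem_filter, mem_univ, true_and]
  omega

lemma isFree_evenWeight {d n : ℕ} (hodd : Odd d) :
    IsFree (Fdd d) (evenWeight n : Set (Fin n → Bool)) := by
  refine isFree_Fdd_iff.mpr fun i hi ⟨h0, h1⟩ => ?_
  simp only [evenWeight, coe_filter, mem_univ, true_and, Set.mem_ofPred_eq] at h0 h1
  have := cubeWeight_image_antipodal_mod_two hi.2
  have := Nat.odd_iff.mp hodd
  omega

lemma two_mul_card_le_of_isFree_Fdd {d n : ℕ} (hdn : d ≤ n) {S : Finset (Fin n → Bool)}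
    (hS : IsFree (Fdd d) (S : Set (Fin n → Bool))) : 2 * #S ≤ 2 ^ n := by
  simpa using two_mul_card_le_of_involutive (flipPrefix_involutive d n)
    fun x hx => flipPrefix_notMem_of_isFree hdn hS hx

lemma exc_eq_card_of_isFree {d n : ℕ} {F : Set (Fin d → Bool)} {S : Finset (Fin n → Bool)}
    (hS : IsFree F (S : Set (Fin n → Bool)))
    (hmax : ∀ T : Finset (Fin n → Bool), IsFree F (T : Set (Fin n → Bool)) → #T ≤ #S) :
    exc n F = #S := by
  have hbdd : ∀ k ∈ {k | ∃ T : Finset (Fin n → Bool), IsFree F (T : Set (Fin n → Bool)) ∧ #T = k},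
      k ≤ #S := by
    rintro _ ⟨T, hT, rfl⟩
    exact hmax T hT
  exact le_antisymm (csSup_le ⟨_, S, hS, rfl⟩ hbdd) (le_csSup ⟨_, hbdd⟩ ⟨S, hS, rfl⟩)

lemma two_mul_exc_Fdd {d n : ℕ} (hodd : Odd d) (hdn : d ≤ n) : 2 * exc n (Fdd d) = 2 ^ n := by
  have hcard := two_mul_card_evenWeight (hodd.pos.trans_le hdn)
  rw [exc_eq_card_of_isFree (isFree_evenWeight hodd) fun T hT => ?_, hcard]
  have := two_mul_card_le_of_isFree_Fdd hdn hT
  omega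

theorem lambda_Fdd_general (d : ℕ) (hodd : Odd d) :
    Filter.Tendsto (fun n : ℕ => (exc n (Fdd d) : ℝ) / 2 ^ n) Filter.atTop (𝓝 (1 / 2)) := by
  refine tendsto_const_nhds.congr' ?_
  filter_upwards [eventually_ge_atTop d] with n hdn
  have hexc : 2 * (exc n (Fdd d) : ℝ) = 2 ^ n := by exact_mod_cast two_mul_exc_Fdd hodd hdn
  rw [eq_div_iff (by positivity), ← hexc]
  ring

/-- For every odd d ≥ 3, λ(F_d^d) = 1/2. -/
theorem lambda_Fdd (d : ℕ) (hd : 3 ≤ d) (hodd : Odd d) :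
    Filter.Tendsto (fun n : ℕ => (exc n (Fdd d) : ℝ) / 2 ^ n) Filter.atTop (𝓝 (1 / 2)) :=
  lambda_Fdd_general d hodd
end
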